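/- Let T and S be bounded linear operators on H admitting reduced A-adjoints T^♯ and S^♯. Then ‖T^♯T + S^♯S‖_A ≤ (1/2)·(‖T‖_A² + ‖S‖_A² + √((‖T‖_A² − ‖S‖_A²)² + 4‖TS^♯‖_A²)). -/

import Mathlib

/-!
Write `A = B† B` (for instance `B = √A`), so that `‖x‖_A = ‖B x‖` and `⟨A x, y⟩ = ⟨B x, B y⟩`.
Reid's inequality `‖B (D x)‖ ≤ ‖D‖ ‖B x‖` for `A D = D† A`, proved by the power trick, makes
every operator with an `A`-adjoint `A`-bounded, so the suprema `‖·‖_A` behave as operator norms.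
Fix `‖B z‖ = 1` and put `u = ‖B T z‖`, `v = ‖B S z‖`, `p = T♯ T z`, `q = S♯ S z`. Then
`‖B p‖ ≤ ‖T‖_A u`, `‖B q‖ ≤ ‖S‖_A v`, `Re ⟨B p, B q⟩ = Re ⟨B T z, B (T S♯) S z⟩ ≤ ‖T S♯‖_A u v`
and `u² + v² = Re ⟨B (p + q), B z⟩ ≤ ‖B (p + q)‖`. Hence
`‖B (p + q)‖² ≤ a² u² + 2 c u v + b² v² ≤ M (u² + v²) ≤ M ‖B (p + q)‖`, where `M` is the largest
eigenvalue of the matrix `[[a², c], [c, b²]]` with `a = ‖T‖_A`, `b = ‖S‖_A`, `c = ‖T S♯‖_A`.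
-/

open ContinuousLinearMap

variable {H : Type*} [NormedAddCommGroup H] [InnerProductSpace ℂ H] [CompleteSpace H]

/-- The seminorm on `H` induced by a positive operator `A`: `‖x‖_A = √⟨Ax,x⟩`. -/
noncomputable def vnA (A : H →L[ℂ] H) (x : H) : ℝ :=
  Real.sqrt (RCLike.re (inner ℂ (A x) x : ℂ))

/-- The `A`-seminorm of an operator: `‖X‖_A = sup {‖Xx‖_A : ‖x‖_A = 1}`. -/
noncomputable def opnA (A : H →L[ℂ] H) (X : H →L[ℂ] H) : ℝ :=
  sSup ((fun x => vnA A (X x)) '' {x : H | vnA A x = 1})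

/-- The `A`-numerical radius: `ω_A(X) = sup {|⟨Xx,x⟩_A| : ‖x‖_A = 1}`. -/
noncomputable def wA (A : H →L[ℂ] H) (X : H →L[ℂ] H) : ℝ :=
  sSup ((fun x => ‖(inner ℂ (A (X x)) x : ℂ)‖) '' {x : H | vnA A x = 1})

/-- `S` is the reduced `A`-adjoint of `T`: `A ∘ S = T* ∘ A` and
`range S ⊆ closure (range A)`. -/
def IsReducedAdjA (A T S : H →L[ℂ] H) : Prop :=
  A ∘L S = (ContinuousLinearMap.adjoint T) ∘L A ∧
    Set.range S ⊆ closure (Set.range (A : H → H))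

/-- `X` is `A`-selfadjoint: `A ∘ X = X* ∘ A`. -/
def IsSelfAdjA (A X : H →L[ℂ] H) : Prop :=
  A ∘L X = (ContinuousLinearMap.adjoint X) ∘L A

/-- `Re_A(T) = (T + T♯)/2`. -/
noncomputable def ReA (T Ts : H →L[ℂ] H) : H →L[ℂ] H := (2 : ℂ)⁻¹ • (T + Ts)

/-- `Im_A(T) = (T - T♯)/(2i)`. -/
noncomputable def ImA (T Ts : H →L[ℂ] H) : H →L[ℂ] H := (2 * Complex.I)⁻¹ • (T - Ts)

open Filter Topology
open scoped InnerProductSpace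

theorem le_of_forall_mul_pow_two_pow_le {c K s t : ℝ} (hc : 0 < c) (hs : 0 ≤ s)
    (h : ∀ n : ℕ, c * t ^ 2 ^ n ≤ K * s ^ 2 ^ n) : t ≤ s := by
  by_contra! hst
  have ht : 0 < t := hs.trans_lt hst
  have hlim : Tendsto (fun n : ℕ => K * (s / t) ^ 2 ^ n) atTop (𝓝 0) := by
    simpa using ((tendsto_pow_atTop_nhds_zero_of_lt_one (div_nonneg hs ht.le)
      ((div_lt_one ht).2 hst)).comp (tendsto_pow_atTop_atTop_of_one_lt one_lt_two)).const_mul K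
  have hle : ∀ n : ℕ, c ≤ K * (s / t) ^ 2 ^ n := fun n => by
    rw [div_pow, ← mul_div_assoc, le_div_iff₀ (by positivity)]
    exact h n
  exact hc.not_ge (ge_of_tendsto' hlim hle)

theorem pow_two_pow_le_of_sq_le_mul {u : ℕ → ℝ} {b : ℝ} (hu : 0 ≤ u 0) (hb : 0 ≤ b)
    (h : ∀ n, u n ^ 2 ≤ u (n + 1) * b) (n : ℕ) : u 0 ^ 2 ^ n ≤ u n * b ^ (2 ^ n - 1) := by
  induction n with
  | zero => simp
  | succ n ih =>
    have hexp : 2 ^ (n + 1) - 1 = 2 * (2 ^ n - 1) + 1 := by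
      have := Nat.one_le_two_pow (n := n); rw [pow_succ]; omega
    calc u 0 ^ 2 ^ (n + 1) = (u 0 ^ 2 ^ n) ^ 2 := by rw [pow_succ, pow_mul]
      _ ≤ (u n * b ^ (2 ^ n - 1)) ^ 2 := by gcongr
      _ = u n ^ 2 * b ^ (2 * (2 ^ n - 1)) := by ring
      _ ≤ u (n + 1) * b * b ^ (2 * (2 ^ n - 1)) := by gcongr; exact h n
      _ = u (n + 1) * b ^ (2 ^ (n + 1) - 1) := by rw [hexp]; ring

theorem le_of_sq_le_mul {x k : ℝ} (hk : 0 ≤ k) (h : x ^ 2 ≤ k * x) : x ≤ k := by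
  nlinarith

theorem quadratic_form_le_largest_eigenvalue_mul (x z c u v : ℝ) :
    x * u ^ 2 + 2 * c * u * v + z * v ^ 2 ≤
      (1 / 2) * (x + z + √((x - z) ^ 2 + 4 * c ^ 2)) * (u ^ 2 + v ^ 2) := by
  generalize hs : √((x - z) ^ 2 + 4 * c ^ 2) = s
  have hs0 : 0 ≤ s := hs ▸ Real.sqrt_nonneg _
  have hs2 : s ^ 2 = (x - z) ^ 2 + 4 * c ^ 2 := hs ▸ Real.sq_sqrt (by positivity)
  have hsP : s * ((1 / 2) * (x + z + s) * (u ^ 2 + v ^ 2) - (x * u ^ 2 + 2 * c * u * v + z * v ^ 2))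
      = ((z - x + s) * u - 2 * c * v) ^ 2 / 4 + ((x - z + s) * v - 2 * c * u) ^ 2 / 4 := by
    linear_combination (u ^ 2 + v ^ 2) / 4 * hs2
  rcases hs0.eq_or_lt with rfl | hs0
  · obtain ⟨rfl, rfl⟩ : x = z ∧ c = 0 := by
      constructor <;> nlinarith [sq_nonneg (x - z), sq_nonneg c]
    nlinarith
  · refine sub_nonneg.1 (nonneg_of_mul_nonneg_right ?_ hs0)
    rw [hsP]; positivity

theorem opnA_nonneg {E : Type*} [NormedAddCommGroup E] [InnerProductSpace ℂ E]
    (A X : E →L[ℂ] E) : 0 ≤ opnA A X :=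
  Real.sSup_nonneg <| by rintro _ ⟨x, -, rfl⟩; exact Real.sqrt_nonneg _

section
variable {A B : H →L[ℂ] H}

theorem adjoint_eq_self_of_adjoint_comp_self_eq (hBA : adjoint B ∘L B = A) : adjoint A = A := by
  rw [← hBA, adjoint_comp, adjoint_adjoint]

theorem inner_apply_eq_of_adjoint_comp_self_eq (hBA : adjoint B ∘L B = A) (x y : H) :
    ⟪A x, y⟫_ℂ = ⟪B x, B y⟫_ℂ := by
  rw [← hBA, comp_apply, adjoint_inner_left]

theorem re_inner_apply_self_eq_of_adjoint_comp_self_eq (hBA : adjoint B ∘L B = A) (x : H) :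
    RCLike.re ⟪A x, x⟫_ℂ = ‖B x‖ ^ 2 := by
  rw [inner_apply_eq_of_adjoint_comp_self_eq hBA, inner_self_eq_norm_sq]

theorem re_inner_apply_le_of_adjoint_comp_self_eq (hBA : adjoint B ∘L B = A) (x y : H) :
    RCLike.re ⟪A x, y⟫_ℂ ≤ ‖B x‖ * ‖B y‖ := by
  rw [inner_apply_eq_of_adjoint_comp_self_eq hBA]
  exact re_inner_le_norm _ _

theorem vnA_eq_norm_apply (hBA : adjoint B ∘L B = A) (x : H) : vnA A x = ‖B x‖ := by
  rw [vnA, re_inner_apply_self_eq_of_adjoint_comp_self_eq hBA, Real.sqrt_sq (norm_nonneg _)]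

theorem opnA_eq_sSup_norm_apply (hBA : adjoint B ∘L B = A) (X : H →L[ℂ] H) :
    opnA A X = sSup ((fun x => ‖B (X x)‖) '' {x : H | ‖B x‖ = 1}) := by
  simp only [opnA, vnA_eq_norm_apply hBA]

theorem opnA_le (hBA : adjoint B ∘L B = A) {X : H →L[ℂ] H} {M : ℝ} (hM : 0 ≤ M)
    (h : ∀ x, ‖B x‖ = 1 → ‖B (X x)‖ ≤ M) : opnA A X ≤ M := by
  rw [opnA_eq_sSup_norm_apply hBA]
  exact Real.sSup_le (by rintro _ ⟨x, hx, rfl⟩; exact h x hx) hM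

theorem norm_apply_le_opnA_mul (hBA : adjoint B ∘L B = A) {X : H →L[ℂ] H} {c : ℝ}
    (hX : ∀ y, ‖B (X y)‖ ≤ c * ‖B y‖) (y : H) : ‖B (X y)‖ ≤ opnA A X * ‖B y‖ := by
  rcases (norm_nonneg (B y)).eq_or_lt with hy | hy
  · simpa [← hy] using hX y
  have hbdd : BddAbove ((fun x => ‖B (X x)‖) '' {x : H | ‖B x‖ = 1}) :=
    ⟨c, by rintro _ ⟨x, hx, rfl⟩; simpa [show ‖B x‖ = 1 from hx] using hX x⟩
  set z : H := ((‖B y‖⁻¹ : ℝ) : ℂ) • y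
  have hnorm : ∀ Y : H →L[ℂ] H, ‖B (Y z)‖ = ‖B y‖⁻¹ * ‖B (Y y)‖ := fun Y => by
    rw [map_smul, map_smul, norm_smul, Complex.norm_real, norm_inv, norm_norm]
  have hz : ‖B z‖ = 1 := by simpa [inv_mul_cancel₀ hy.ne'] using hnorm 1
  have hle : ‖B y‖⁻¹ * ‖B (X y)‖ ≤ opnA A X := by
    rw [← hnorm, opnA_eq_sSup_norm_apply hBA]
    exact le_csSup hbdd ⟨z, hz, rfl⟩
  rwa [inv_mul_le_iff₀ hy, mul_comm] at hle

theorem IsSelfAdjA.pow {D : H →L[ℂ] H} (hD : IsSelfAdjA A D) (m : ℕ) : IsSelfAdjA A (D ^ m) := by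
  -- `IsSelfAdjA A D` unfolds to `SemiconjBy A D (star D)`.
  have : SemiconjBy A (D ^ m) (star D ^ m) := SemiconjBy.pow_right hD m
  rwa [← star_pow] at this

theorem IsSelfAdjA.norm_apply_sq_le (hBA : adjoint B ∘L B = A) {D : H →L[ℂ] H}
    (hD : IsSelfAdjA A D) (x : H) : ‖B (D x)‖ ^ 2 ≤ ‖B (D (D x))‖ * ‖B x‖ :=
  calc ‖B (D x)‖ ^ 2 = RCLike.re ⟪A (D x), D x⟫_ℂ :=
        (re_inner_apply_self_eq_of_adjoint_comp_self_eq hBA _).symm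
    _ = RCLike.re ⟪A (D (D x)), x⟫_ℂ := by
        rw [← adjoint_inner_left, ← comp_apply (adjoint D), ← hD, comp_apply]
    _ ≤ ‖B (D (D x))‖ * ‖B x‖ := re_inner_apply_le_of_adjoint_comp_self_eq hBA _ _

theorem IsSelfAdjA.norm_apply_le (hBA : adjoint B ∘L B = A) {D : H →L[ℂ] H}
    (hD : IsSelfAdjA A D) (x : H) : ‖B (D x)‖ ≤ ‖D‖ * ‖B x‖ := by
  rcases (norm_nonneg (B x)).eq_or_lt with hx | hx
  · have := hD.norm_apply_sq_le hBA x
    rw [← hx, mul_zero] at this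
    rw [← hx, mul_zero]
    nlinarith [norm_nonneg (B (D x))]
  set u : ℕ → ℝ := fun n => ‖B ((D ^ 2 ^ n) x)‖ with hu
  have hstep : ∀ n, u n ^ 2 ≤ u (n + 1) * ‖B x‖ := fun n => by
    have hsq : (D ^ 2 ^ (n + 1)) x = (D ^ 2 ^ n) ((D ^ 2 ^ n) x) := by
      rw [pow_succ, pow_mul, sq]; rfl
    simpa only [hu, hsq] using (hD.pow (2 ^ n)).norm_apply_sq_le hBA x
  have hbound : ∀ n, u n ≤ ‖B‖ * ‖x‖ * ‖D‖ ^ 2 ^ n := fun n =>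
    calc u n ≤ ‖B‖ * (‖D ^ 2 ^ n‖ * ‖x‖) := (B.le_opNorm _).trans (by gcongr; exact le_opNorm _ _)
      _ ≤ ‖B‖ * (‖D‖ ^ 2 ^ n * ‖x‖) := by gcongr; exact norm_pow_le' D (by positivity)
      _ = ‖B‖ * ‖x‖ * ‖D‖ ^ 2 ^ n := by ring
  refine le_of_forall_mul_pow_two_pow_le (K := ‖B‖ * ‖x‖) hx (by positivity) fun n => ?_
  calc ‖B x‖ * ‖B (D x)‖ ^ 2 ^ n ≤ ‖B x‖ * (u n * ‖B x‖ ^ (2 ^ n - 1)) := by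
        gcongr; simpa [hu] using pow_two_pow_le_of_sq_le_mul (norm_nonneg (B (D x))) hx.le hstep n
    _ = u n * ‖B x‖ ^ 2 ^ n := by rw [mul_left_comm, mul_pow_sub_one (by positivity)]
    _ ≤ ‖B‖ * ‖x‖ * ‖D‖ ^ 2 ^ n * ‖B x‖ ^ 2 ^ n := by gcongr; exact hbound n
    _ = ‖B‖ * ‖x‖ * (‖D‖ * ‖B x‖) ^ 2 ^ n := by ring

def IsAdjA (A T Ts : H →L[ℂ] H) : Prop :=
  A ∘L Ts = adjoint T ∘L A

theorem IsReducedAdjA.isAdjA {T Ts : H →L[ℂ] H} (h : IsReducedAdjA A T Ts) : IsAdjA A T Ts :=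
  h.1

namespace IsAdjA

variable {T Ts : H →L[ℂ] H}

theorem inner_apply (h : IsAdjA A T Ts) (x y : H) : ⟪A (Ts x), y⟫_ℂ = ⟪A x, T y⟫_ℂ := by
  rw [← comp_apply A, h, comp_apply, adjoint_inner_left]

theorem symm (hA : adjoint A = A) (h : IsAdjA A T Ts) : IsAdjA A Ts T := by
  simpa only [IsAdjA, adjoint_comp, adjoint_adjoint, hA] using (congrArg adjoint h).symm

theorem isSelfAdjA_comp (hA : adjoint A = A) (h : IsAdjA A T Ts) : IsSelfAdjA A (Ts ∘L T) := by
  rw [IsSelfAdjA, adjoint_comp, ← comp_assoc, h, comp_assoc, h.symm hA, comp_assoc]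

theorem norm_apply_le (hBA : adjoint B ∘L B = A) (h : IsAdjA A T Ts) (y : H) :
    ‖B (T y)‖ ≤ √‖Ts ∘L T‖ * ‖B y‖ := by
  have hsq : ‖B (T y)‖ ^ 2 ≤ (√‖Ts ∘L T‖ * ‖B y‖) ^ 2 :=
    calc ‖B (T y)‖ ^ 2 = RCLike.re ⟪A ((Ts ∘L T) y), y⟫_ℂ := by
          rw [comp_apply, h.inner_apply, re_inner_apply_self_eq_of_adjoint_comp_self_eq hBA]
      _ ≤ ‖B ((Ts ∘L T) y)‖ * ‖B y‖ := re_inner_apply_le_of_adjoint_comp_self_eq hBA _ _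
      _ ≤ ‖Ts ∘L T‖ * ‖B y‖ * ‖B y‖ := by
          have hTsT := h.isSelfAdjA_comp (adjoint_eq_self_of_adjoint_comp_self_eq hBA)
          gcongr
          exact hTsT.norm_apply_le hBA y
      _ = (√‖Ts ∘L T‖ * ‖B y‖) ^ 2 := by rw [mul_pow, Real.sq_sqrt (norm_nonneg _)]; ring
  exact (pow_le_pow_iff_left₀ (norm_nonneg _) (by positivity) two_ne_zero).1 hsq

theorem norm_apply_le_opnA_mul (hBA : adjoint B ∘L B = A) (h : IsAdjA A T Ts) (y : H) :
    ‖B (T y)‖ ≤ opnA A T * ‖B y‖ :=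
  _root_.norm_apply_le_opnA_mul hBA (h.norm_apply_le hBA) y

theorem norm_adjA_apply_le_opnA_mul (hBA : adjoint B ∘L B = A) (h : IsAdjA A T Ts) (y : H) :
    ‖B (Ts y)‖ ≤ opnA A T * ‖B y‖ := by
  refine le_of_sq_le_mul (by positivity [opnA_nonneg A T]) ?_
  calc ‖B (Ts y)‖ ^ 2 = RCLike.re ⟪A y, T (Ts y)⟫_ℂ := by
        rw [← h.inner_apply, re_inner_apply_self_eq_of_adjoint_comp_self_eq hBA]
    _ ≤ ‖B y‖ * ‖B (T (Ts y))‖ := re_inner_apply_le_of_adjoint_comp_self_eq hBA _ _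
    _ ≤ ‖B y‖ * (opnA A T * ‖B (Ts y)‖) := by gcongr; exact h.norm_apply_le_opnA_mul hBA _
    _ = opnA A T * ‖B y‖ * ‖B (Ts y)‖ := by ring

end IsAdjA

theorem norm_apply_adjA_comp_add_adjA_comp_le (hBA : adjoint B ∘L B = A) {T Ts S Ss : H →L[ℂ] H}
    (hT : IsAdjA A T Ts) (hS : IsAdjA A S Ss) {z : H} (hz : ‖B z‖ = 1) :
    ‖B ((Ts ∘L T + Ss ∘L S) z)‖ ≤ (1 / 2) * (opnA A T ^ 2 + opnA A S ^ 2 +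
      √((opnA A T ^ 2 - opnA A S ^ 2) ^ 2 + 4 * opnA A (T ∘L Ss) ^ 2)) := by
  set a := opnA A T
  set b := opnA A S
  set c := opnA A (T ∘L Ss)
  set u := ‖B (T z)‖
  set v := ‖B (S z)‖
  set p := Ts (T z)
  set q := Ss (S z)
  have hp : ‖B p‖ ≤ a * u := hT.norm_adjA_apply_le_opnA_mul hBA (T z)
  have hq : ‖B q‖ ≤ b * v := hS.norm_adjA_apply_le_opnA_mul hBA (S z)
  have hTSs : ∀ y, ‖B ((T ∘L Ss) y)‖ ≤ c * ‖B y‖ := norm_apply_le_opnA_mul hBA fun y =>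
    calc ‖B (T (Ss y))‖ ≤ a * ‖B (Ss y)‖ := hT.norm_apply_le_opnA_mul hBA _
      _ ≤ a * (b * ‖B y‖) := by
          gcongr
          exacts [opnA_nonneg A T, hS.norm_adjA_apply_le_opnA_mul hBA y]
      _ = a * b * ‖B y‖ := by ring
  have hpq : RCLike.re ⟪B p, B q⟫_ℂ ≤ c * u * v :=
    calc RCLike.re ⟪B p, B q⟫_ℂ = RCLike.re ⟪A (T z), T q⟫_ℂ := by
          rw [← inner_apply_eq_of_adjoint_comp_self_eq hBA, hT.inner_apply]
      _ ≤ u * ‖B ((T ∘L Ss) (S z))‖ := re_inner_apply_le_of_adjoint_comp_self_eq hBA _ _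
      _ ≤ u * (c * v) := by gcongr; exact hTSs _
      _ = c * u * v := by ring
  have hsum : u ^ 2 + v ^ 2 ≤ ‖B (p + q)‖ :=
    calc u ^ 2 + v ^ 2 = RCLike.re ⟪A (p + q), z⟫_ℂ := by
          rw [map_add, inner_add_left, map_add, hT.inner_apply, hS.inner_apply,
            re_inner_apply_self_eq_of_adjoint_comp_self_eq hBA,
            re_inner_apply_self_eq_of_adjoint_comp_self_eq hBA]
      _ ≤ ‖B (p + q)‖ * ‖B z‖ := re_inner_apply_le_of_adjoint_comp_self_eq hBA _ _
      _ = ‖B (p + q)‖ := by rw [hz, mul_one]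
  refine le_of_sq_le_mul (by positivity) ?_
  calc ‖B (p + q)‖ ^ 2 = ‖B p‖ ^ 2 + 2 * RCLike.re ⟪B p, B q⟫_ℂ + ‖B q‖ ^ 2 := by
        rw [map_add, norm_add_sq (𝕜 := ℂ)]
    _ ≤ a ^ 2 * u ^ 2 + 2 * c * u * v + b ^ 2 * v ^ 2 := by
        have := pow_le_pow_left₀ (norm_nonneg _) hp 2
        have := pow_le_pow_left₀ (norm_nonneg _) hq 2
        nlinarith
    _ ≤ (1 / 2) * (a ^ 2 + b ^ 2 + √((a ^ 2 - b ^ 2) ^ 2 + 4 * c ^ 2)) * (u ^ 2 + v ^ 2) :=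
        quadratic_form_le_largest_eigenvalue_mul _ _ _ _ _
    _ ≤ (1 / 2) * (a ^ 2 + b ^ 2 + √((a ^ 2 - b ^ 2) ^ 2 + 4 * c ^ 2)) * ‖B (p + q)‖ := by
        gcongr

end

theorem stmt15_general (A T S Ts Ss : H →L[ℂ] H) (hA : A.IsPositive)
    (hTs : IsReducedAdjA A T Ts) (hSs : IsReducedAdjA A S Ss) :
    opnA A (Ts ∘L T + Ss ∘L S) ≤
      (1/2) * ((opnA A T)^2 + (opnA A S)^2 +
        Real.sqrt (((opnA A T)^2 - (opnA A S)^2)^2 + 4 * (opnA A (T ∘L Ss))^2)) := by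
  obtain ⟨B, hBA⟩ : ∃ B : H →L[ℂ] H, adjoint B ∘L B = A :=
    (CStarAlgebra.nonneg_iff_eq_star_mul_self.1 ((nonneg_iff_isPositive A).2 hA)).imp
      fun _ hB => hB.symm
  exact opnA_le hBA (by positivity) fun z hz =>
    norm_apply_adjA_comp_add_adjA_comp_le hBA hTs.isAdjA hSs.isAdjA hz

theorem stmt15 (A T S Ts Ss : H →L[ℂ] H) (hA : A.IsPositive) (hA0 : A ≠ 0)
    (hTs : IsReducedAdjA A T Ts) (hSs : IsReducedAdjA A S Ss) :
    opnA A (Ts ∘L T + Ss ∘L S) ≤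
      (1/2) * ((opnA A T)^2 + (opnA A S)^2 +
        Real.sqrt (((opnA A T)^2 - (opnA A S)^2)^2 + 4 * (opnA A (T ∘L Ss))^2)) :=
  stmt15_general A T S Ts Ss hA hTs hSs
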